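/- For d ≥ 5 there exists C < ∞ such that for all distinct nonzero x, y ∈ ℤ^d, the sum Σ_{z ∈ ℤ^d \ {0,x,y}} |z|^{−d+2}·|x−z|^{−d+2}·|y−z|^{−d+4} is at most C·(|y|^{−d+4}|x−y|^{−d+4} + |y|^{−d+4}|x|^{−d+4} + |x−y|^{−d+4}|x|^{−d+4}). -/

import Mathlib

/-!
A dyadic decomposition into annuli `r ≤ |w| ≤ 2r`, each holding at most `(6r)^d` lattice points,
gives `∑_{0<|w|≤R} |w|^e ≲ R^(d+e)` for `-d < e ≤ 0` and `∑_{|w|>R} |w|^e ≲ R^(d+e)` for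
`e < -d`. Splitting `z` according to whether it is close to `0`, close to `x`, or far from
both yields the two-point bound `∑_z |z|^e |x-z|^f ≲ |x|^(d+e+f)` when `e + f < -d`.

For the three-point sum let `D = min(|y|, |x-y|)/2`. Where `|y-z| ≤ D` the first two factors are
at most `(|y|/2)^(2-d) (|x-y|/2)^(2-d)`, and the sum of `|y-z|^(4-d)` there is `≲ D^4`, with
`D^4 ≤ (|y|/2)^2 (|x-y|/2)^2`. Where `|y-z| > D` the last factor is at most
`D^(4-d) ≲ |y|^(4-d) + |x-y|^(4-d)`, and the two-point bound with `e = f = 2-d`, which needs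
`d ≥ 5`, contributes `|x|^(4-d)`.

All sums are taken in `ℝ≥0∞`, so that summability is only recovered at the very end.
-/

open scoped BigOperators

noncomputable def nrm {d : ℕ} (x : Fin d → ℤ) : ℝ :=
  Real.sqrt (∑ i, ((x i : ℝ)) ^ 2)

open scoped ENNReal

section LatticeNorm

variable {d : ℕ}

noncomputable def latticeToEuclidean : (Fin d → ℤ) →+ EuclideanSpace ℝ (Fin d) :=
  AddMonoidHom.mk' (fun z => WithLp.toLp 2 fun i => (z i : ℝ)) fun a b => by ext i; simp

lemma nrm_eq_norm (z : Fin d → ℤ) : nrm z = ‖latticeToEuclidean z‖ := by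
  simp [nrm, EuclideanSpace.norm_eq, latticeToEuclidean]

lemma nrm_nonneg (z : Fin d → ℤ) : 0 ≤ nrm z := Real.sqrt_nonneg _

lemma nrm_sub_nrm_le (a b : Fin d → ℤ) : nrm a - nrm b ≤ nrm (a - b) := by
  simpa only [nrm_eq_norm, map_sub] using norm_sub_norm_le _ _

lemma nrm_sub_le (a b : Fin d → ℤ) : nrm (a - b) ≤ nrm a + nrm b := by
  simpa only [nrm_eq_norm, map_sub] using norm_sub_le _ _

lemma abs_apply_le_nrm (z : Fin d → ℤ) (i : Fin d) : |(z i : ℝ)| ≤ nrm z := by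
  simpa [nrm_eq_norm, latticeToEuclidean] using PiLp.norm_apply_le (latticeToEuclidean z) i

lemma one_le_nrm {z : Fin d → ℤ} (hz : z ≠ 0) : 1 ≤ nrm z := by
  obtain ⟨i, hi⟩ := Function.ne_iff.mp hz
  have : (1 : ℝ) ≤ |(z i : ℝ)| := by exact_mod_cast Int.one_le_abs hi
  exact this.trans (abs_apply_le_nrm z i)

lemma nrm_pos {z : Fin d → ℤ} (hz : z ≠ 0) : 0 < nrm z := zero_lt_one.trans_le (one_le_nrm hz)

lemma encard_setOf_nrm_le (r : ℝ) (hr : 0 ≤ r) :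
    (({w : Fin d → ℤ | nrm w ≤ r}.encard : ℕ∞) : ℝ≥0∞) ≤ ENNReal.ofReal ((2 * r + 1) ^ d) := by
  set N := ⌊r⌋₊
  have hsub : {w : Fin d → ℤ | nrm w ≤ r} ⊆
      (Fintype.piFinset fun _ : Fin d => Finset.Icc (-(N : ℤ)) N : Set (Fin d → ℤ)) := by
    intro w hw
    simp only [Finset.mem_coe, Fintype.mem_piFinset, Finset.mem_Icc, ← abs_le]
    intro i
    have : ((w i).natAbs : ℝ) ≤ r := by
      rw [Nat.cast_natAbs, Int.cast_abs]
      exact (abs_apply_le_nrm w i).trans hw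
    rw [Int.abs_eq_natAbs]
    exact_mod_cast Nat.le_floor this
  have hN : (2 * N + 1 : ℝ) ≤ 2 * r + 1 := by linarith [Nat.floor_le hr]
  calc (({w : Fin d → ℤ | nrm w ≤ r}.encard : ℕ∞) : ℝ≥0∞)
      ≤ ((((2 * N + 1) ^ d : ℕ) : ℕ∞) : ℝ≥0∞) := by
        gcongr
        refine (Set.encard_le_encard hsub).trans_eq ?_
        rw [Set.encard_coe_eq_coe_finsetCard, Fintype.card_piFinset]
        simp only [Int.card_Icc, Finset.prod_const, Finset.card_univ, Fintype.card_fin]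
        congr 2
        omega
    _ ≤ ENNReal.ofReal ((2 * r + 1) ^ d) := by
        rw [ENat.toENNReal_coe, ← ENNReal.ofReal_natCast]
        gcongr
        push_cast
        gcongr

noncomputable def nrmPow (e : ℝ) (w : Fin d → ℤ) : ℝ≥0∞ := ENNReal.ofReal (nrm w ^ e)

def annulus (d : ℕ) (r : ℝ) : Set (Fin d → ℤ) := {w | r ≤ nrm w ∧ nrm w ≤ 2 * r}

def punctBall (d : ℕ) (R : ℝ) : Set (Fin d → ℤ) := {w | w ≠ 0 ∧ nrm w ≤ R}

end LatticeNorm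

section DyadicSums

variable {d : ℕ}

lemma tsum_annulus_nrmPow_le {e r : ℝ} (he : e ≤ 0) (hr : 0 < r) :
    ∑' w : annulus d r, nrmPow e w.1 ≤ ENNReal.ofReal (6 ^ d * r ^ (d + e)) := by
  rcases lt_or_ge (2 * r) 1 with hsmall | hbig
  · have hempty : annulus d r = ∅ := by
      refine Set.eq_empty_of_forall_notMem fun w ⟨hrw, _⟩ => ?_
      have hw0 : w ≠ 0 := by
        rintro rfl
        simp [nrm] at hrw
        linarith
      linarith [one_le_nrm hw0]
    simp [hempty]
  calc ∑' w : annulus d r, nrmPow e w.1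
      ≤ ∑' _ : annulus d r, ENNReal.ofReal (r ^ e) :=
        ENNReal.tsum_le_tsum fun w =>
          ENNReal.ofReal_le_ofReal (Real.rpow_le_rpow_of_nonpos hr w.2.1 he)
    _ = (annulus d r).encard * ENNReal.ofReal (r ^ e) := ENNReal.tsum_set_const _ _
    _ ≤ ENNReal.ofReal ((2 * (2 * r) + 1) ^ d) * ENNReal.ofReal (r ^ e) := by
        have hsub : annulus d r ⊆ {w | nrm w ≤ 2 * r} := fun w hw => hw.2
        gcongr
        exact (ENat.toENNReal_le.2 (Set.encard_le_encard hsub)).trans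
          (encard_setOf_nrm_le _ (by linarith))
    _ ≤ ENNReal.ofReal ((6 * r) ^ d * r ^ e) := by
        rw [← ENNReal.ofReal_mul (by positivity)]
        gcongr
        linarith
    _ = ENNReal.ofReal (6 ^ d * r ^ (d + e)) := by
        rw [Real.rpow_add hr, Real.rpow_natCast, mul_pow, mul_assoc]

lemma punctBall_subset_iUnion_annulus {R : ℝ} (hR : 0 < R) :
    punctBall d R ⊆ ⋃ n : ℕ, annulus d (R / 2 * 2⁻¹ ^ n) := by
  rintro w ⟨hw0, hwR⟩
  have hw : 0 < nrm w := nrm_pos hw0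
  obtain ⟨n, hlow, hup⟩ := exists_nat_pow_near_of_lt_one (div_pos hw hR)
    ((div_le_one hR).2 hwR) (by norm_num : (0 : ℝ) < 2⁻¹) (by norm_num)
  rw [lt_div_iff₀ hR, pow_succ] at hlow
  rw [div_le_iff₀ hR] at hup
  exact Set.mem_iUnion.2 ⟨n, by linarith, by linarith⟩

lemma setOf_lt_nrm_subset_iUnion_annulus {R : ℝ} (hR : 0 < R) :
    {w : Fin d → ℤ | R < nrm w} ⊆ ⋃ n : ℕ, annulus d (R * 2 ^ n) := by
  intro w hw
  obtain ⟨n, hlow, hup⟩ := exists_nat_pow_near ((one_le_div hR).2 (le_of_lt hw))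
    (by norm_num : (1 : ℝ) < 2)
  rw [le_div_iff₀ hR] at hlow
  rw [div_lt_iff₀ hR, pow_succ] at hup
  exact Set.mem_iUnion.2 ⟨n, by linarith, by linarith⟩

lemma tsum_ofReal_mul_rpow_geometric {a q c p : ℝ} (ha : 0 ≤ a) (hq : 0 ≤ q) (hc : 0 ≤ c)
    (hqp : q ^ p < 1) :
    ∑' n : ℕ, ENNReal.ofReal (c * (a * q ^ n) ^ p) = ENNReal.ofReal (c * a ^ p / (1 - q ^ p)) := by
  have hterm : ∀ n : ℕ, c * (a * q ^ n) ^ p = c * a ^ p * (q ^ p) ^ n := fun n => by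
    rw [Real.mul_rpow ha (by positivity), ← Real.rpow_pow_comm hq, mul_assoc]
  have hqp0 : 0 ≤ q ^ p := Real.rpow_nonneg hq p
  simp_rw [hterm]
  rw [← ENNReal.ofReal_tsum_of_nonneg (fun n => by positivity)
    ((summable_geometric_of_lt_one hqp0 hqp).mul_left _), tsum_mul_left,
    tsum_geometric_of_lt_one hqp0 hqp, div_eq_mul_inv]

lemma tsum_iUnion_annulus_nrmPow_le {e : ℝ} (he : e ≤ 0) (r : ℕ → ℝ) (hr : ∀ n, 0 < r n) :
    ∑' w : ⋃ n, annulus d (r n), nrmPow e w.1 ≤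
      ∑' n, ENNReal.ofReal (6 ^ d * r n ^ (d + e)) :=
  (ENNReal.tsum_iUnion_le_tsum _ _).trans (ENNReal.tsum_le_tsum fun n => tsum_annulus_nrmPow_le he (hr n))

theorem tsum_punctBall_nrmPow_le {e : ℝ} (he : -(d : ℝ) < e) (he0 : e ≤ 0) :
    ∃ C : ℝ, 0 < C ∧ ∀ R : ℝ, 0 < R →
      ∑' w : punctBall d R, nrmPow e w.1 ≤ ENNReal.ofReal (C * R ^ (d + e)) := by
  have hq : (2⁻¹ : ℝ) ^ ((d : ℝ) + e) < 1 :=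
    Real.rpow_lt_one (by norm_num) (by norm_num) (by linarith)
  refine ⟨6 ^ d * 2⁻¹ ^ ((d : ℝ) + e) / (1 - 2⁻¹ ^ ((d : ℝ) + e)),
    div_pos (by positivity) (by linarith), fun R hR => ?_⟩
  calc ∑' w : punctBall d R, nrmPow e w.1
      ≤ ∑' w : ⋃ n : ℕ, annulus d (R / 2 * 2⁻¹ ^ n), nrmPow e w.1 :=
        ENNReal.tsum_mono_subtype _ (punctBall_subset_iUnion_annulus hR)
    _ ≤ ∑' n : ℕ, ENNReal.ofReal (6 ^ d * (R / 2 * 2⁻¹ ^ n) ^ (d + e)) :=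
        tsum_iUnion_annulus_nrmPow_le he0 _ fun n => by positivity
    _ = _ := by
        rw [tsum_ofReal_mul_rpow_geometric (by positivity) (by norm_num) (by positivity) hq,
          div_eq_mul_inv R, Real.mul_rpow hR.le (by norm_num)]
        ring_nf

theorem tsum_setOf_lt_nrm_nrmPow_le {e : ℝ} (he : e < -(d : ℝ)) :
    ∃ C : ℝ, 0 < C ∧ ∀ R : ℝ, 0 < R →
      ∑' w : {w : Fin d → ℤ | R < nrm w}, nrmPow e w.1 ≤
        ENNReal.ofReal (C * R ^ (d + e)) := by
  have hq : (2 : ℝ) ^ ((d : ℝ) + e) < 1 :=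
    Real.rpow_lt_one_of_one_lt_of_neg (by norm_num) (by linarith)
  refine ⟨6 ^ d / (1 - 2 ^ ((d : ℝ) + e)), div_pos (by positivity) (by linarith),
    fun R hR => ?_⟩
  calc ∑' w : {w : Fin d → ℤ | R < nrm w}, nrmPow e w.1
      ≤ ∑' w : ⋃ n : ℕ, annulus d (R * 2 ^ n), nrmPow e w.1 :=
        ENNReal.tsum_mono_subtype _ (setOf_lt_nrm_subset_iUnion_annulus hR)
    _ ≤ ∑' n : ℕ, ENNReal.ofReal (6 ^ d * (R * 2 ^ n) ^ (d + e)) :=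
        tsum_iUnion_annulus_nrmPow_le (he.trans_le (neg_nonpos.2 d.cast_nonneg)).le _
          fun n => by positivity
    _ = _ := by
        rw [tsum_ofReal_mul_rpow_geometric hR.le (by norm_num) (by positivity) hq]
        ring_nf

end DyadicSums

section TwoPoint

variable {d : ℕ}

lemma nrmPow_le_of_le {e R : ℝ} {w : Fin d → ℤ} (he : e ≤ 0) (hR : 0 < R) (h : R ≤ nrm w) :
    nrmPow e w ≤ ENNReal.ofReal (R ^ e) :=
  ENNReal.ofReal_le_ofReal (Real.rpow_le_rpow_of_nonpos hR h he)

lemma nrmPow_add {e f : ℝ} {w : Fin d → ℤ} (hw : 0 < nrm w) :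
    nrmPow (e + f) w = nrmPow e w * nrmPow f w := by
  rw [nrmPow, nrmPow, nrmPow, Real.rpow_add hw, ENNReal.ofReal_mul (Real.rpow_nonneg hw.le _)]

lemma tsum_preimage_sub_left {G α : Type*} [AddCommGroup G] [AddCommMonoid α] [TopologicalSpace α]
    (c : G) (s : Set G) (f : G → α) : ∑' z : (c - ·) ⁻¹' s, f z = ∑' w : s, f (c - w) :=
  (((Equiv.subLeft c).subtypeEquiv fun w => by simp).tsum_eq fun z => f z.1).symm

theorem tsum_punctBall_nrmPow_mul_le {e f : ℝ} (he : -(d : ℝ) < e) (he0 : e ≤ 0) (hf0 : f ≤ 0) :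
    ∃ C : ℝ, 0 < C ∧ ∀ (x : Fin d → ℤ) (R : ℝ), 0 < R → 2 * R ≤ nrm x →
      ∑' z : punctBall d R, nrmPow e z.1 * nrmPow f (x - z.1) ≤
        ENNReal.ofReal (C * R ^ (d + e + f)) := by
  obtain ⟨C, hC, hnear⟩ := tsum_punctBall_nrmPow_le he he0
  refine ⟨C, hC, fun x R hR hRx => ?_⟩
  have hxz : ∀ z : punctBall d R, nrmPow f (x - z.1) ≤ ENNReal.ofReal (R ^ f) := fun z =>
    nrmPow_le_of_le hf0 hR (by linarith [nrm_sub_nrm_le x z.1, z.2.2])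
  calc ∑' z : punctBall d R, nrmPow e z.1 * nrmPow f (x - z.1)
      ≤ ∑' z : punctBall d R, ENNReal.ofReal (R ^ f) * nrmPow e z.1 :=
        ENNReal.tsum_le_tsum fun z => by rw [mul_comm]; gcongr; exact hxz z
    _ = ENNReal.ofReal (R ^ f) * ∑' z : punctBall d R, nrmPow e z.1 := ENNReal.tsum_mul_left
    _ ≤ ENNReal.ofReal (R ^ f) * ENNReal.ofReal (C * R ^ (d + e)) := by gcongr; exact hnear R hR
    _ = ENNReal.ofReal (C * R ^ (d + e + f)) := by
        rw [← ENNReal.ofReal_mul (by positivity), Real.rpow_add hR (d + e) f]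
        ring_nf

theorem tsum_far_nrmPow_mul_le {e f : ℝ} (hf0 : f ≤ 0) (hef : e + f < -(d : ℝ)) :
    ∃ C : ℝ, 0 < C ∧ ∀ (x : Fin d → ℤ) (R : ℝ), 0 < R → nrm x ≤ 2 * R →
      ∑' z : {z : Fin d → ℤ | R < nrm z ∧ R < nrm (x - z)}, nrmPow e z.1 * nrmPow f (x - z.1) ≤
        ENNReal.ofReal (C * R ^ (d + e + f)) := by
  obtain ⟨C, hC, htail⟩ := tsum_setOf_lt_nrm_nrmPow_le hef
  refine ⟨3 ^ (-f) * C, by positivity, fun x R hR hxR => ?_⟩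
  -- on this region `|z| ≤ |x| + |x - z| < 3 |x - z|`
  have hcomp : ∀ z : {z : Fin d → ℤ | R < nrm z ∧ R < nrm (x - z)},
      nrmPow e z.1 * nrmPow f (x - z.1) ≤ ENNReal.ofReal (3 ^ (-f)) * nrmPow (e + f) z.1 := by
    rintro ⟨z, hzR, hxzR⟩
    have hz : 0 < nrm z := hR.trans hzR
    have h3 : nrm z ≤ 3 * nrm (x - z) := by
      linarith [sub_sub_cancel x z ▸ nrm_sub_le x (x - z)]
    have hpow : nrm (x - z) ^ f ≤ 3 ^ (-f) * nrm z ^ f := by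
      calc nrm (x - z) ^ f = 3 ^ (-f) * (3 * nrm (x - z)) ^ f := by
            rw [Real.mul_rpow (by norm_num) (nrm_nonneg _), ← mul_assoc,
              ← Real.rpow_add (by norm_num), neg_add_cancel, Real.rpow_zero, one_mul]
        _ ≤ 3 ^ (-f) * nrm z ^ f :=
            mul_le_mul_of_nonneg_left (Real.rpow_le_rpow_of_nonpos hz h3 hf0) (by positivity)
    have : nrmPow f (x - z) ≤ ENNReal.ofReal (3 ^ (-f)) * nrmPow f z := by
      rw [nrmPow, nrmPow, ← ENNReal.ofReal_mul (by positivity)]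
      exact ENNReal.ofReal_le_ofReal hpow
    rw [nrmPow_add hz, mul_left_comm]
    gcongr
  calc ∑' z : {z : Fin d → ℤ | R < nrm z ∧ R < nrm (x - z)}, nrmPow e z.1 * nrmPow f (x - z.1)
      ≤ ∑' z : {z : Fin d → ℤ | R < nrm z ∧ R < nrm (x - z)},
          ENNReal.ofReal (3 ^ (-f)) * nrmPow (e + f) z.1 := ENNReal.tsum_le_tsum hcomp
    _ = ENNReal.ofReal (3 ^ (-f)) *
          ∑' z : {z : Fin d → ℤ | R < nrm z ∧ R < nrm (x - z)}, nrmPow (e + f) z.1 :=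
        ENNReal.tsum_mul_left
    _ ≤ ENNReal.ofReal (3 ^ (-f)) * ∑' z : {z : Fin d → ℤ | R < nrm z}, nrmPow (e + f) z.1 := by
        gcongr 1
        exact ENNReal.tsum_mono_subtype _ fun z hz => hz.1
    _ ≤ ENNReal.ofReal (3 ^ (-f)) * ENNReal.ofReal (C * R ^ (d + (e + f))) := by
        gcongr; exact htail R hR
    _ = ENNReal.ofReal (3 ^ (-f) * C * R ^ (d + e + f)) := by
        rw [← ENNReal.ofReal_mul (by positivity), add_assoc, mul_assoc]

theorem tsum_nrmPow_mul_nrmPow_sub_le {e f : ℝ} (he : -(d : ℝ) < e) (he0 : e ≤ 0)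
    (hf : -(d : ℝ) < f) (hf0 : f ≤ 0) (hef : e + f < -(d : ℝ)) :
    ∃ C : ℝ, 0 < C ∧ ∀ x : Fin d → ℤ, x ≠ 0 →
      ∑' z : {z : Fin d → ℤ | z ≠ 0 ∧ z ≠ x}, nrmPow e z.1 * nrmPow f (x - z.1) ≤
        ENNReal.ofReal (C * nrm x ^ (d + e + f)) := by
  obtain ⟨C₁, hC₁, hnear₁⟩ := tsum_punctBall_nrmPow_mul_le he he0 hf0
  obtain ⟨C₂, hC₂, hnear₂⟩ := tsum_punctBall_nrmPow_mul_le hf hf0 he0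
  obtain ⟨C₃, hC₃, hfar⟩ := tsum_far_nrmPow_mul_le (d := d) hf0 hef
  refine ⟨(C₁ + C₂ + C₃) * 2⁻¹ ^ ((d : ℝ) + e + f), by positivity, fun x hx => ?_⟩
  set R := nrm x / 2 with hRdef
  have hR : 0 < R := by linarith [nrm_pos hx]
  have hcover : {z : Fin d → ℤ | z ≠ 0 ∧ z ≠ x} ⊆
      punctBall d R ∪ (x - ·) ⁻¹' punctBall d R ∪ {z | R < nrm z ∧ R < nrm (x - z)} := by
    rintro z ⟨hz0, hzx⟩
    by_cases hz : nrm z ≤ R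
    · exact .inl (.inl ⟨hz0, hz⟩)
    by_cases hxz : nrm (x - z) ≤ R
    · exact .inl (.inr ⟨sub_ne_zero.2 (Ne.symm hzx), hxz⟩)
    exact .inr ⟨not_le.1 hz, not_le.1 hxz⟩
  set F : (Fin d → ℤ) → ℝ≥0∞ := fun z => nrmPow e z * nrmPow f (x - z)
  have hswap : ∑' z : (x - ·) ⁻¹' punctBall d R, F z =
      ∑' w : punctBall d R, nrmPow f w.1 * nrmPow e (x - w.1) := by
    rw [tsum_preimage_sub_left x _ F]
    simp only [F, sub_sub_cancel, mul_comm]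
  calc ∑' z : {z : Fin d → ℤ | z ≠ 0 ∧ z ≠ x}, F z
      ≤ ∑' z : ↑(punctBall d R ∪ (x - ·) ⁻¹' punctBall d R ∪
          {z | R < nrm z ∧ R < nrm (x - z)}), F z := ENNReal.tsum_mono_subtype F hcover
    _ ≤ ∑' z : punctBall d R, F z + ∑' z : (x - ·) ⁻¹' punctBall d R, F z +
          ∑' z : {z : Fin d → ℤ | R < nrm z ∧ R < nrm (x - z)}, F z :=
        (ENNReal.tsum_union_le F _ _).trans (add_le_add (ENNReal.tsum_union_le F _ _) le_rfl)
    _ ≤ ENNReal.ofReal (C₁ * R ^ (d + e + f)) + ENNReal.ofReal (C₂ * R ^ (d + f + e)) +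
          ENNReal.ofReal (C₃ * R ^ (d + e + f)) := by
        rw [hswap]
        gcongr
        · exact hnear₁ x R hR (by linarith)
        · exact hnear₂ x R hR (by linarith)
        · exact hfar x R hR (by linarith)
    _ = ENNReal.ofReal ((C₁ + C₂ + C₃) * 2⁻¹ ^ ((d : ℝ) + e + f) * nrm x ^ (d + e + f)) := by
        rw [add_right_comm (d : ℝ) f e, ← ENNReal.ofReal_add (by positivity) (by positivity),
          ← ENNReal.ofReal_add (by positivity) (by positivity), hRdef, div_eq_mul_inv,
          Real.mul_rpow (nrm_nonneg x) (by norm_num)]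
        ring_nf

end TwoPoint

lemma half_rpow_mul_sq_le {a D e : ℝ} (ha : 0 < a) (hD : 0 ≤ D) (hDa : D ≤ a / 2) :
    (a / 2) ^ e * D ^ 2 ≤ 2 ^ (-(e + 2)) * a ^ (e + 2) := by
  rw [← Real.rpow_two D]
  calc (a / 2) ^ e * D ^ (2 : ℝ) ≤ (a / 2) ^ e * (a / 2) ^ (2 : ℝ) := by gcongr
    _ = 2 ^ (-(e + 2)) * a ^ (e + 2) := by
        rw [← Real.rpow_add (by positivity), Real.div_rpow ha.le zero_le_two, div_eq_mul_inv,
          ← Real.rpow_neg zero_le_two, mul_comm]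

lemma min_div_two_rpow_le {a b c : ℝ} (ha : 0 < a) (hb : 0 < b) :
    (min a b / 2) ^ c ≤ 2 ^ (-c) * (a ^ c + b ^ c) := by
  rw [Real.div_rpow (le_min ha.le hb.le) zero_le_two, div_eq_mul_inv,
    ← Real.rpow_neg zero_le_two, mul_comm]
  gcongr
  rcases min_choice a b with h | h <;> rw [h]
  · exact le_add_of_nonneg_right (by positivity)
  · exact le_add_of_nonneg_left (by positivity)

section ThreePoint

variable {d : ℕ}

noncomputable def mixedKernel (x y z : Fin d → ℤ) : ℝ≥0∞ :=
  nrmPow (2 - d) z * nrmPow (2 - d) (x - z) * nrmPow (4 - d) (y - z)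

theorem tsum_mixedKernel_near_le (hd : 4 ≤ d) :
    ∃ C : ℝ, 0 < C ∧ ∀ x y : Fin d → ℤ, y ≠ 0 → x ≠ y →
      ∑' z : (y - ·) ⁻¹' punctBall d (min (nrm y) (nrm (x - y)) / 2), mixedKernel x y z.1 ≤
        ENNReal.ofReal (C * (nrm y ^ ((4 : ℝ) - d) * nrm (x - y) ^ ((4 : ℝ) - d))) := by
  have hd' : (4 : ℝ) ≤ d := by exact_mod_cast hd
  obtain ⟨C, hC, hnear⟩ := tsum_punctBall_nrmPow_le (d := d) (e := 4 - d) (by linarith) (by linarith)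
  refine ⟨C * (2 ^ ((d : ℝ) - 4)) ^ 2, by positivity, fun x y hy hxy => ?_⟩
  set A := nrm y
  set B := nrm (x - y)
  set D := min A B / 2 with hDdef
  have hA : 0 < A := nrm_pos hy
  have hB : 0 < B := nrm_pos (sub_ne_zero.2 hxy)
  have hD : 0 < D := by positivity
  have hDA : D ≤ A / 2 := by rw [hDdef]; linarith [min_le_left A B]
  have hDB : D ≤ B / 2 := by rw [hDdef]; linarith [min_le_right A B]
  set K := (A / 2) ^ (2 - d : ℝ) * (B / 2) ^ (2 - d : ℝ)
  have hpt : ∀ w : punctBall d D, mixedKernel x y (y - w.1) ≤ ENNReal.ofReal K * nrmPow (4 - d) w.1 := by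
    rintro ⟨w, -, hwD⟩
    have hxyw : B ≤ nrm (x - (y - w)) + nrm w := by
      simpa only [show x - (y - w) - w = x - y by abel] using nrm_sub_le (x - (y - w)) w
    rw [mixedKernel, sub_sub_cancel, ENNReal.ofReal_mul (by positivity)]
    gcongr
    · exact nrmPow_le_of_le (by linarith) (by positivity) (by linarith [nrm_sub_nrm_le y w])
    · exact nrmPow_le_of_le (by linarith) (by positivity) (by linarith)
  have hK : K * (C * D ^ (d + (4 - d) : ℝ)) ≤
      C * (2 ^ ((d : ℝ) - 4)) ^ 2 * (A ^ (4 - d : ℝ) * B ^ (4 - d : ℝ)) := by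
    have hD4 : D ^ (d + (4 - d) : ℝ) = D ^ 2 * D ^ 2 := by
      rw [add_sub_cancel, ← pow_add]
      norm_num
    calc K * (C * D ^ (d + (4 - d) : ℝ))
        = C * (((A / 2) ^ (2 - d : ℝ) * D ^ 2) * ((B / 2) ^ (2 - d : ℝ) * D ^ 2)) := by
          rw [hD4]; ring
      _ ≤ C * ((2 ^ (-(2 - d + 2 : ℝ)) * A ^ (2 - d + 2 : ℝ)) *
            (2 ^ (-(2 - d + 2 : ℝ)) * B ^ (2 - d + 2 : ℝ))) := by
          gcongr C * (?_ * ?_)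
          · exact half_rpow_mul_sq_le hA hD.le hDA
          · exact half_rpow_mul_sq_le hB hD.le hDB
      _ = C * (2 ^ ((d : ℝ) - 4)) ^ 2 * (A ^ (4 - d : ℝ) * B ^ (4 - d : ℝ)) := by
          rw [show (2 - d + 2 : ℝ) = 4 - d by ring, neg_sub]
          ring
  rw [tsum_preimage_sub_left y _ (mixedKernel x y)]
  calc ∑' w : punctBall d D, mixedKernel x y (y - w.1)
      ≤ ∑' w : punctBall d D, ENNReal.ofReal K * nrmPow (4 - d) w.1 := ENNReal.tsum_le_tsum hpt
    _ = ENNReal.ofReal K * ∑' w : punctBall d D, nrmPow (4 - d) w.1 := ENNReal.tsum_mul_left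
    _ ≤ ENNReal.ofReal K * ENNReal.ofReal (C * D ^ (d + (4 - d) : ℝ)) := by
        gcongr; exact hnear D hD
    _ ≤ _ := by
        rw [← ENNReal.ofReal_mul (by positivity)]
        exact ENNReal.ofReal_le_ofReal hK

theorem tsum_mixedKernel_far_le (hd : 5 ≤ d) :
    ∃ C : ℝ, 0 < C ∧ ∀ x y : Fin d → ℤ, x ≠ 0 → y ≠ 0 → x ≠ y →
      ∑' z : {z : Fin d → ℤ | (z ≠ 0 ∧ z ≠ x) ∧ min (nrm y) (nrm (x - y)) / 2 < nrm (y - z)},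
          mixedKernel x y z.1 ≤
        ENNReal.ofReal (C * (nrm y ^ ((4 : ℝ) - d) * nrm x ^ ((4 : ℝ) - d) +
          nrm (x - y) ^ ((4 : ℝ) - d) * nrm x ^ ((4 : ℝ) - d))) := by
  have hd' : (5 : ℝ) ≤ d := by exact_mod_cast hd
  obtain ⟨C, hC, htwo⟩ := tsum_nrmPow_mul_nrmPow_sub_le (d := d) (e := 2 - d) (f := 2 - d)
    (by linarith) (by linarith) (by linarith) (by linarith) (by linarith)
  refine ⟨C * 2 ^ ((d : ℝ) - 4), by positivity, fun x y hx hy hxy => ?_⟩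
  set A := nrm y
  set B := nrm (x - y)
  set D := min A B / 2
  have hA : 0 < A := nrm_pos hy
  have hB : 0 < B := nrm_pos (sub_ne_zero.2 hxy)
  have hD : 0 < D := by positivity
  set G : (Fin d → ℤ) → ℝ≥0∞ := fun z => nrmPow (2 - d) z * nrmPow (2 - d) (x - z)
  have hDx : D ^ (4 - d : ℝ) * (C * nrm x ^ (d + (2 - d) + (2 - d) : ℝ)) ≤
      C * 2 ^ ((d : ℝ) - 4) * (A ^ (4 - d : ℝ) * nrm x ^ (4 - d : ℝ) +
        B ^ (4 - d : ℝ) * nrm x ^ (4 - d : ℝ)) := by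
    rw [show (d + (2 - d) + (2 - d) : ℝ) = 4 - d by ring]
    calc D ^ (4 - d : ℝ) * (C * nrm x ^ (4 - d : ℝ))
        ≤ 2 ^ (-(4 - d : ℝ)) * (A ^ (4 - d : ℝ) + B ^ (4 - d : ℝ)) * (C * nrm x ^ (4 - d : ℝ)) :=
          mul_le_mul_of_nonneg_right (min_div_two_rpow_le hA hB) (by unfold nrm; positivity)
      _ = _ := by rw [neg_sub]; ring
  calc ∑' z : {z : Fin d → ℤ | (z ≠ 0 ∧ z ≠ x) ∧ D < nrm (y - z)}, mixedKernel x y z.1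
      ≤ ∑' z : {z : Fin d → ℤ | (z ≠ 0 ∧ z ≠ x) ∧ D < nrm (y - z)},
          ENNReal.ofReal (D ^ (4 - d : ℝ)) * G z.1 :=
        ENNReal.tsum_le_tsum fun z => by
          rw [mixedKernel, mul_comm]
          gcongr
          exact nrmPow_le_of_le (by linarith) hD z.2.2.le
    _ = ENNReal.ofReal (D ^ (4 - d : ℝ)) *
          ∑' z : {z : Fin d → ℤ | (z ≠ 0 ∧ z ≠ x) ∧ D < nrm (y - z)}, G z.1 :=
        ENNReal.tsum_mul_left
    _ ≤ ENNReal.ofReal (D ^ (4 - d : ℝ)) * ∑' z : {z : Fin d → ℤ | z ≠ 0 ∧ z ≠ x}, G z.1 := by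
        gcongr 1
        exact ENNReal.tsum_mono_subtype G fun z hz => hz.1
    _ ≤ ENNReal.ofReal (D ^ (4 - d : ℝ)) *
          ENNReal.ofReal (C * nrm x ^ (d + (2 - d) + (2 - d) : ℝ)) := by
        gcongr; exact htwo x hx
    _ ≤ _ := by
        rw [← ENNReal.ofReal_mul (by positivity)]
        exact ENNReal.ofReal_le_ofReal hDx

theorem tsum_mixedKernel_le (hd : 5 ≤ d) :
    ∃ C : ℝ, 0 < C ∧ ∀ x y : Fin d → ℤ, x ≠ 0 → y ≠ 0 → x ≠ y →
      ∑' z : {z : Fin d → ℤ | z ≠ 0 ∧ z ≠ x ∧ z ≠ y}, mixedKernel x y z.1 ≤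
        ENNReal.ofReal (C * (nrm y ^ ((4 : ℝ) - d) * nrm (x - y) ^ ((4 : ℝ) - d) +
          nrm y ^ ((4 : ℝ) - d) * nrm x ^ ((4 : ℝ) - d) +
          nrm (x - y) ^ ((4 : ℝ) - d) * nrm x ^ ((4 : ℝ) - d))) := by
  obtain ⟨C₁, hC₁, hnear⟩ := tsum_mixedKernel_near_le (d := d) (by omega)
  obtain ⟨C₂, hC₂, hfar⟩ := tsum_mixedKernel_far_le hd
  refine ⟨C₁ + C₂, by positivity, fun x y hx hy hxy => ?_⟩
  set D := min (nrm y) (nrm (x - y)) / 2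
  have hcover : {z : Fin d → ℤ | z ≠ 0 ∧ z ≠ x ∧ z ≠ y} ⊆
      (y - ·) ⁻¹' punctBall d D ∪ {z | (z ≠ 0 ∧ z ≠ x) ∧ D < nrm (y - z)} := by
    rintro z ⟨hz0, hzx, hzy⟩
    rcases le_or_gt (nrm (y - z)) D with h | h
    · exact .inl ⟨sub_ne_zero.2 (Ne.symm hzy), h⟩
    · exact .inr ⟨⟨hz0, hzx⟩, h⟩
  refine (ENNReal.tsum_mono_subtype (mixedKernel x y) hcover).trans <|
    (ENNReal.tsum_union_le _ _ _).trans <|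
    (add_le_add (hnear x y hy hxy) (hfar x y hx hy hxy)).trans ?_
  rw [← ENNReal.ofReal_add (by unfold nrm; positivity) (by unfold nrm; positivity)]
  refine ENNReal.ofReal_le_ofReal ?_
  have : 0 ≤ nrm y ^ ((4 : ℝ) - d) * nrm (x - y) ^ ((4 : ℝ) - d) := by unfold nrm; positivity
  have : 0 ≤ nrm y ^ ((4 : ℝ) - d) * nrm x ^ ((4 : ℝ) - d) +
      nrm (x - y) ^ ((4 : ℝ) - d) * nrm x ^ ((4 : ℝ) - d) := by unfold nrm; positivity
  nlinarith

end ThreePoint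

lemma summable_and_tsum_le_of_tsum_ofReal_le {ι : Type*} {f : ι → ℝ} {B : ℝ}
    (hf : ∀ i, 0 ≤ f i) (hB : 0 ≤ B) (h : ∑' i, ENNReal.ofReal (f i) ≤ ENNReal.ofReal B) :
    Summable f ∧ ∑' i, f i ≤ B := by
  have hsum : Summable f := by
    simpa [ENNReal.toReal_ofReal (hf _)] using
      ENNReal.summable_toReal (ne_top_of_le_ne_top ENNReal.ofReal_ne_top h)
  refine ⟨hsum, ?_⟩
  rwa [← ENNReal.ofReal_tsum_of_nonneg hf hsum, ENNReal.ofReal_le_ofReal_iff hB] at h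

/-- For `d ≥ 5` there is `C < ∞` such that for all distinct nonzero
`x, y ∈ ℤ^d`,
`∑_{z ∉ {0,x,y}} |z|^{2-d} |x-z|^{2-d} |y-z|^{4-d}
  ≤ C (|y|^{4-d}|x-y|^{4-d} + |y|^{4-d}|x|^{4-d} + |x-y|^{4-d}|x|^{4-d})`. -/
theorem mixed_convolution_upper_bound (d : ℕ) (hd : 5 ≤ d) :
    ∃ C : ℝ, 0 < C ∧ ∀ x y : Fin d → ℤ, x ≠ 0 → y ≠ 0 → x ≠ y →
      Summable (fun z : {z : Fin d → ℤ // z ≠ 0 ∧ z ≠ x ∧ z ≠ y} =>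
        nrm z.1 ^ ((2 : ℝ) - d) * nrm (x - z.1) ^ ((2 : ℝ) - d) *
          nrm (y - z.1) ^ ((4 : ℝ) - d)) ∧
      (∑' z : {z : Fin d → ℤ // z ≠ 0 ∧ z ≠ x ∧ z ≠ y},
          nrm z.1 ^ ((2 : ℝ) - d) * nrm (x - z.1) ^ ((2 : ℝ) - d) *
            nrm (y - z.1) ^ ((4 : ℝ) - d))
        ≤ C * (nrm y ^ ((4 : ℝ) - d) * nrm (x - y) ^ ((4 : ℝ) - d) +
               nrm y ^ ((4 : ℝ) - d) * nrm x ^ ((4 : ℝ) - d) +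
               nrm (x - y) ^ ((4 : ℝ) - d) * nrm x ^ ((4 : ℝ) - d)) := by
  obtain ⟨C, hC, hbound⟩ := tsum_mixedKernel_le hd
  refine ⟨C, hC, fun x y hx hy hxy => summable_and_tsum_le_of_tsum_ofReal_le
    (fun z => by unfold nrm; positivity) (by unfold nrm; positivity) ?_⟩
  refine (le_of_eq (tsum_congr fun z => ?_)).trans (hbound x y hx hy hxy)
  rw [ENNReal.ofReal_mul' (Real.rpow_nonneg (nrm_nonneg _) _),
    ENNReal.ofReal_mul' (Real.rpow_nonneg (nrm_nonneg _) _)]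
  rfl
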